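/- arXiv:1705.06087 — 3 statements merged into one kernel-verified Lean document; each statement's English description precedes it below -/
import Mathlib

section
/- Let m ≥ 2 be an integer and x ≥ 2 a real number. The number of quadruples (p₁, p₂, q₁, q₂) of primes with p₁, p₂, q₁, q₂ ≤ x, each coprime to m, satisfying the congruence p₁⁻¹·p₂⁻¹ ≡ q₁⁻¹·q₂⁻¹ (mod m) (equivalently p₁·p₂ ≡ q₁·q₂ (mod m)), is at most 2·x²·(x²/m + 1). -/
/-!
Forget the coprimality conditions. For fixed primes `q₁, q₂ ≤ x`, the products `n = p₁ p₂` of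
primes `p₁, p₂ ≤ x` lie in `[0, x²]` and in the residue class of `q₁ q₂` mod `m`, so they take
at most `x²/m + 1` values; each value `n` arises from at most two ordered pairs `(p₁, p₂)`,
since `n` has only the prime factors `p₁, p₂`. Summing over the at most `x²` pairs `(q₁, q₂)`
gives the bound.
-/

open Finset

lemma Nat.card_filter_Iic_mod_eq_le (m M r : ℕ) :
    #{n ∈ Iic M | n % m = r} ≤ M / m + 1 := by
  calc #{n ∈ Iic M | n % m = r} ≤ #(Iic (M / m)) := by
        refine card_le_card_of_injOn (· / m) (fun n hn ↦ ?_) fun a ha b hb hab ↦ ?_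
        · simp only [coe_filter, Set.mem_ofPred_eq, mem_Iic, coe_Iic, Set.mem_Iic] at hn ⊢
          exact Nat.div_le_div_right hn.1
        · simp only [coe_filter, Set.mem_ofPred_eq] at ha hb
          have hab : a / m = b / m := hab
          rw [← Nat.div_add_mod a m, ← Nat.div_add_mod b m, hab, ha.2, hb.2]
    _ = M / m + 1 := Nat.card_Iic _

lemma Nat.card_filter_prime_mul_eq_le_two (s : Finset ℕ) (hs : ∀ p ∈ s, p.Prime) (n : ℕ) :
    #{u ∈ s ×ˢ s | u.1 * u.2 = n} ≤ 2 := by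
  rcases eq_empty_or_nonempty {u ∈ s ×ˢ s | u.1 * u.2 = n} with hempty | ⟨⟨a, b⟩, hab⟩
  · simp [hempty]
  simp only [mem_filter, mem_product] at hab
  obtain ⟨⟨ha, hb⟩, rfl⟩ := hab
  have ha₀ := (hs a ha).ne_zero
  have hb₀ := (hs b hb).ne_zero
  calc #{u ∈ s ×ˢ s | u.1 * u.2 = a * b} ≤ #(a * b).primeFactors := by
        refine card_le_card_of_injOn Prod.fst (fun u hu ↦ ?_) fun u hu v hv huv ↦ ?_
        · simp only [coe_filter, mem_product, Set.mem_ofPred_eq] at hu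
          rw [mem_coe, Nat.mem_primeFactors]
          exact ⟨hs _ hu.1.1, ⟨u.2, hu.2.symm⟩, mul_ne_zero ha₀ hb₀⟩
        · simp only [coe_filter, mem_product, Set.mem_ofPred_eq] at hu hv
          have hu₀ := (hs _ hu.1.1).pos
          refine Prod.ext huv (Nat.eq_of_mul_eq_mul_left hu₀ ?_)
          rw [hu.2, ← hv.2, huv]
    _ = #{a, b} := by
        rw [Nat.primeFactors_mul ha₀ hb₀, (hs a ha).primeFactors, (hs b hb).primeFactors]
        rfl
    _ ≤ 2 := card_le_two

lemma Nat.card_filter_prime_mul_modEq_le (s : Finset ℕ) (N : ℕ) (hs : ∀ p ∈ s, p.Prime ∧ p ≤ N)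
    (m c : ℕ) : #{u ∈ s ×ˢ s | u.1 * u.2 ≡ c [MOD m]} ≤ 2 * (N * N / m + 1) := by
  set S := {u ∈ s ×ˢ s | u.1 * u.2 ≡ c [MOD m]}
  have hfiber (n : ℕ) : #{u ∈ S | u.1 * u.2 = n} ≤ 2 :=
    (card_le_card (filter_subset_filter _ (filter_subset _ _))).trans
      (card_filter_prime_mul_eq_le_two s (fun p hp ↦ (hs p hp).1) n)
  have himage : image (fun u ↦ u.1 * u.2) S ⊆ {n ∈ Iic (N * N) | n % m = c % m} := by
    intro n hn
    simp only [S, mem_image, mem_filter, mem_product] at hn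
    obtain ⟨u, ⟨⟨hu₁, hu₂⟩, hmod⟩, rfl⟩ := hn
    exact mem_filter.2 ⟨mem_Iic.2 (Nat.mul_le_mul (hs _ hu₁).2 (hs _ hu₂).2), hmod⟩
  calc #S ≤ 2 * #(image (fun u ↦ u.1 * u.2) S) :=
        card_le_mul_card_image _ 2 fun n _ ↦ hfiber n
    _ ≤ 2 * (N * N / m + 1) :=
        Nat.mul_le_mul_left 2 ((card_le_card himage).trans (card_filter_Iic_mod_eq_le m _ _))

lemma Nat.card_filter_prime_quadruple_modEq_le (s : Finset ℕ) (N : ℕ)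
    (hs : ∀ p ∈ s, p.Prime ∧ p ≤ N) (m : ℕ) :
    #{q ∈ s ×ˢ s ×ˢ s ×ˢ s | q.1 * q.2.1 ≡ q.2.2.1 * q.2.2.2 [MOD m]} ≤
      2 * (N * N / m + 1) * #s ^ 2 := by
  set F := {q ∈ s ×ˢ s ×ˢ s ×ˢ s | q.1 * q.2.1 ≡ q.2.2.1 * q.2.2.2 [MOD m]}
  have hfiber (v : ℕ × ℕ) : #{q ∈ F | q.2.2 = v} ≤ 2 * (N * N / m + 1) := by
    refine le_trans ?_ (card_filter_prime_mul_modEq_le s N hs m (v.1 * v.2))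
    refine card_le_card_of_injOn (fun q ↦ (q.1, q.2.1)) (fun q hq ↦ ?_)
      fun q hq q' hq' hqq' ↦ ?_
    · simp only [F, coe_filter, mem_filter, mem_product, Set.mem_ofPred_eq] at hq ⊢
      obtain ⟨⟨⟨h₁, h₂, -⟩, hmod⟩, rfl⟩ := hq
      exact ⟨⟨h₁, h₂⟩, hmod⟩
    · simp only [coe_filter, Set.mem_ofPred_eq, Prod.mk.injEq] at hq hq' hqq'
      exact Prod.ext hqq'.1 (Prod.ext hqq'.2 (hq.2.trans hq'.2.symm))
  have himage : image (fun q ↦ q.2.2) F ⊆ s ×ˢ s := by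
    intro v hv
    simp only [F, mem_image, mem_filter, mem_product] at hv
    obtain ⟨q, ⟨⟨-, -, h₃, h₄⟩, -⟩, rfl⟩ := hv
    exact mem_product.2 ⟨h₃, h₄⟩
  calc #F ≤ 2 * (N * N / m + 1) * #(image (fun q ↦ q.2.2) F) :=
        card_le_mul_card_image _ _ fun v _ ↦ hfiber v
    _ ≤ 2 * (N * N / m + 1) * #s ^ 2 := by
        rw [sq, ← card_product]
        exact Nat.mul_le_mul_left _ (card_le_card himage)

theorem stmt_8_general (m : ℕ) (x : ℝ) (hx : 2 ≤ x) :
    ({q : ℕ × ℕ × ℕ × ℕ |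
        q.1.Prime ∧ q.2.1.Prime ∧ q.2.2.1.Prime ∧ q.2.2.2.Prime ∧
        (q.1 : ℝ) ≤ x ∧ (q.2.1 : ℝ) ≤ x ∧ (q.2.2.1 : ℝ) ≤ x ∧ (q.2.2.2 : ℝ) ≤ x ∧
        Nat.Coprime q.1 m ∧ Nat.Coprime q.2.1 m ∧
        Nat.Coprime q.2.2.1 m ∧ Nat.Coprime q.2.2.2 m ∧
        q.1 * q.2.1 ≡ q.2.2.1 * q.2.2.2 [MOD m]}.ncard : ℝ)
      ≤ 2 * x ^ 2 * (x ^ 2 / m + 1) := by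
  set N := ⌊x⌋₊
  set s := {p ∈ Icc 1 N | p.Prime}
  have hs : ∀ p ∈ s, p.Prime ∧ p ≤ N := fun p hp ↦ by
    simp only [s, mem_filter, mem_Icc] at hp
    exact ⟨hp.2, hp.1.2⟩
  have hNx : (N : ℝ) ≤ x := Nat.floor_le (by linarith)
  have hsN : (#s : ℝ) ≤ x := by
    refine le_trans ?_ hNx
    exact_mod_cast (card_filter_le _ _).trans (by simp)
  have hdiv : ((N * N / m : ℕ) : ℝ) ≤ x ^ 2 / m :=
    Nat.cast_div_le.trans (by gcongr; push_cast; nlinarith)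
  set F := {q ∈ s ×ˢ s ×ˢ s ×ˢ s | q.1 * q.2.1 ≡ q.2.2.1 * q.2.2.2 [MOD m]}
  calc _ ≤ (#F : ℝ) := by
        refine Nat.cast_le.2 ((Set.ncard_le_ncard (t := ↑F) ?_).trans_eq (Set.ncard_coe_finset F))
        rintro ⟨a, b, c, d⟩ ⟨ha, hb, hc, hd, hax, hbx, hcx, hdx, -, -, -, -, hmod⟩
        simp [F, s, ha, hb, hc, hd, ha.one_le, hb.one_le, hc.one_le, hd.one_le, N, Nat.le_floor,
          hax, hbx, hcx, hdx, hmod]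
    _ ≤ 2 * ((N * N / m : ℕ) + 1) * (#s : ℝ) ^ 2 := by
        exact_mod_cast Nat.card_filter_prime_quadruple_modEq_le s N hs m
    _ ≤ 2 * (x ^ 2 / m + 1) * x ^ 2 := by gcongr
    _ = 2 * x ^ 2 * (x ^ 2 / m + 1) := by ring

theorem stmt_8 (m : ℕ) (hm : 2 ≤ m) (x : ℝ) (hx : 2 ≤ x) :
    ({q : ℕ × ℕ × ℕ × ℕ |
        q.1.Prime ∧ q.2.1.Prime ∧ q.2.2.1.Prime ∧ q.2.2.2.Prime ∧
        (q.1 : ℝ) ≤ x ∧ (q.2.1 : ℝ) ≤ x ∧ (q.2.2.1 : ℝ) ≤ x ∧ (q.2.2.2 : ℝ) ≤ x ∧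
        Nat.Coprime q.1 m ∧ Nat.Coprime q.2.1 m ∧
        Nat.Coprime q.2.2.1 m ∧ Nat.Coprime q.2.2.2 m ∧
        q.1 * q.2.1 ≡ q.2.2.1 * q.2.2.2 [MOD m]}.ncard : ℝ)
      ≤ 2 * x ^ 2 * (x ^ 2 / m + 1) :=
  stmt_8_general m x hx
end

section
/- There is an absolute constant C > 0 such that the following holds. Let m ≥ 2 be an integer, let a be an integer with gcd(a,m) = f, and let x be a real number with x ≥ m^{1/2}. Then the exponential sum S₂(a;x) = Σ_{p₁,p₂ ≤ x, gcd(p₁p₂,m)=1} e(a·p₁⁻¹·p₂⁻¹ / m), where the sum runs over pairs of primes p₁, p₂ ≤ x coprime to m, satisfies |S₂(a;x)| ≤ C·x·(f·x/m + 1)·(m/f)^{1/2}. -/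
open scoped BigOperators

/-- The multiplicative inverse modulo `m` of `n`, as a natural number in `[0, m)`. -/
noncomputable def minv (m n : ℕ) : ℕ := ((n : ZMod m)⁻¹).val

/-- The primes `p ≤ x` that are coprime to `m`. -/
noncomputable def primesTo (m : ℕ) (x : ℝ) : Finset ℕ :=
  open Classical in
  (Finset.Icc 1 ⌊x⌋₊).filter fun p => p.Prime ∧ Nat.Coprime p m

/-- The additive character `e_m(z) = exp(2 π i z / m)`. -/
noncomputable def eM (m : ℕ) (z : ℂ) : ℂ := Complex.exp (2 * Real.pi * Complex.I * z / m)

/-!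
Write `a = f a₁`, `m = f q` with `f = gcd(a, m)`, so that `e_m(a u v) = ψ(a₁ u v)` for the
standard additive character `ψ` of `ZMod q`, which is primitive. The sum becomes a bilinear form
`∑ᵢ ∑ⱼ ψ(αᵢ βⱼ)` with `αₚ = a₁ p⁻¹` and `βₚ = p⁻¹` in `ZMod q`. Cauchy–Schwarz in `i`, then
extending the `i`-sum to all `r ∈ ZMod q` at the cost of the largest fibre of `α`, leaves
`∑_r |∑ⱼ ψ(r βⱼ)|²`, which by orthogonality is `q` times the number of pairs with `βⱼ = βⱼ'`.
Since `p⁻¹ mod q` determines `p mod q`, every fibre of `α` or `β` has at most `x/q + 1` primes,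
so `|S₂| ≤ π(x) (x/q + 1) √q ≤ x (f x/m + 1) √(m/f)`.
-/

open Finset

section BilinearAddChar

variable {ι R : Type*} [CommRing R] [Fintype R] [DecidableEq R] {ψ : AddChar R ℂ}

theorem sum_norm_sq_sum_addChar_mul (hψ : ψ.IsPrimitive) (t : Finset ι) (β : ι → R) :
    ∑ r, ‖∑ j ∈ t, ψ (r * β j)‖ ^ 2 =
      Fintype.card R * ∑ j ∈ t, (#{j' ∈ t | β j' = β j} : ℝ) := by
  apply Complex.ofReal_injective
  push_cast
  calc ∑ r, ((‖∑ j ∈ t, ψ (r * β j)‖ : ℂ)) ^ 2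
      = ∑ r, ∑ j ∈ t, ∑ j' ∈ t, ψ (r * (β j - β j')) := by
        refine sum_congr rfl fun r _ => ?_
        rw [← Complex.mul_conj', map_sum, sum_mul_sum]
        refine sum_congr rfl fun j _ => sum_congr rfl fun j' _ => ?_
        rw [← AddChar.map_neg_eq_conj, ← AddChar.map_add_eq_mul, mul_sub, sub_eq_add_neg]
    _ = ∑ j ∈ t, ∑ j' ∈ t, if β j' = β j then (Fintype.card R : ℂ) else 0 := by
        rw [sum_comm]
        refine sum_congr rfl fun j _ => ?_
        rw [sum_comm]
        refine sum_congr rfl fun j' _ => ?_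
        simp only [AddChar.sum_mulShift _ hψ, sub_eq_zero, eq_comm, Nat.cast_ite, Nat.cast_zero]
    _ = _ := by
        rw [mul_sum]
        refine sum_congr rfl fun j _ => ?_
        rw [← sum_filter, sum_const, nsmul_eq_mul, mul_comm]

theorem sum_comp_le_mul_sum_of_card_fiber_le {κ : Type*} [Fintype κ] [DecidableEq κ]
    (s : Finset ι) (α : ι → κ) {K : ℕ} (hK : ∀ r, #{i ∈ s | α i = r} ≤ K)
    (g : κ → ℝ) (hg : 0 ≤ g) :
    ∑ i ∈ s, g (α i) ≤ K * ∑ r, g r := by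
  rw [sum_comp, mul_sum]
  calc ∑ r ∈ s.image α, #{i ∈ s | α i = r} • g r
      ≤ ∑ r ∈ s.image α, K * g r :=
        sum_le_sum fun r _ => by
          rw [nsmul_eq_mul]; gcongr; exacts [hg r, hK r]
    _ ≤ ∑ r, K * g r :=
        sum_le_sum_of_subset_of_nonneg (subset_univ _) fun r _ _ =>
          mul_nonneg K.cast_nonneg (hg r)

theorem norm_sum_sum_addChar_mul_sq_le (hψ : ψ.IsPrimitive) (s t : Finset ι) (α β : ι → R)
    {K L : ℕ} (hα : ∀ r, #{i ∈ s | α i = r} ≤ K) (hβ : ∀ r, #{j ∈ t | β j = r} ≤ L) :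
    ‖∑ i ∈ s, ∑ j ∈ t, ψ (α i * β j)‖ ^ 2 ≤ #s * K * (#t * L * Fintype.card R) := by
  set T : R → ℂ := fun r => ∑ j ∈ t, ψ (r * β j)
  have hL : ∑ j ∈ t, (#{j' ∈ t | β j' = β j} : ℝ) ≤ #t * L := by
    simpa using sum_le_sum fun j (_ : j ∈ t) => (Nat.cast_le (α := ℝ)).2 (hβ (β j))
  calc ‖∑ i ∈ s, T (α i)‖ ^ 2
      ≤ (∑ i ∈ s, ‖T (α i)‖) ^ 2 := by gcongr; exact norm_sum_le _ _
    _ ≤ #s * ∑ i ∈ s, ‖T (α i)‖ ^ 2 := sq_sum_le_card_mul_sum_sq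
    _ ≤ #s * (K * ∑ r, ‖T r‖ ^ 2) := by
        gcongr
        exact sum_comp_le_mul_sum_of_card_fiber_le s α hα (fun r => ‖T r‖ ^ 2)
          fun r => by positivity
    _ = #s * K * (Fintype.card R * ∑ j ∈ t, (#{j' ∈ t | β j' = β j} : ℝ)) := by
        rw [sum_norm_sq_sum_addChar_mul hψ, mul_assoc]
    _ ≤ #s * K * (#t * L * Fintype.card R) := by
        rw [mul_comm (_ * _ : ℝ) (Fintype.card R : ℝ)]
        gcongr

theorem norm_sum_sum_addChar_mul_le (hψ : ψ.IsPrimitive) (s : Finset ι) (α β : ι → R) {K : ℕ}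
    (hα : ∀ r, #{i ∈ s | α i = r} ≤ K) (hβ : ∀ r, #{j ∈ s | β j = r} ≤ K) :
    ‖∑ i ∈ s, ∑ j ∈ s, ψ (α i * β j)‖ ≤ #s * K * √(Fintype.card R) := by
  have key := norm_sum_sum_addChar_mul_sq_le hψ s s α β hα hβ
  rw [← mul_assoc, ← sq] at key
  rw [← Real.sqrt_sq (norm_nonneg _), ← Real.sqrt_sq (by positivity : (0 : ℝ) ≤ #s * K),
    ← Real.sqrt_mul (sq_nonneg _)]
  exact Real.sqrt_le_sqrt key

end BilinearAddChar

theorem card_filter_eq_le_div_add_one {κ : Type*} [DecidableEq κ] (q X : ℕ) {s : Finset ℕ}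
    (hs : ∀ n ∈ s, n ≤ X) (γ : ℕ → κ)
    (hγ : ∀ n ∈ s, ∀ n' ∈ s, γ n = γ n' → n % q = n' % q) (r : κ) :
    #{n ∈ s | γ n = r} ≤ X / q + 1 := by
  simpa using card_le_card_of_injOn (t := range (X / q + 1)) (· / q)
    (fun n hn => by
      simpa [Nat.lt_succ_iff] using Nat.div_le_div_right (c := q) (hs n (mem_filter.1 hn).1))
    (fun n hn n' hn' (h : n / q = n' / q) => by
      obtain ⟨hn, hr⟩ := mem_filter.1 hn
      obtain ⟨hn', hr'⟩ := mem_filter.1 hn'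
      rw [← Nat.div_add_mod n q, ← Nat.div_add_mod n' q, h, hγ n hn n' hn' (hr.trans hr'.symm)])

theorem exists_eq_gcd_mul_of_isCoprime {a : ℤ} {m : ℕ} (hm : m ≠ 0) :
    ∃ (a₁ : ℤ) (q : ℕ), a = a.gcd m * a₁ ∧ m = a.gcd m * q ∧ IsCoprime a₁ q := by
  have hf : 0 < a.gcd m := Int.gcd_pos_of_ne_zero_right _ (Int.natCast_ne_zero.2 hm)
  refine ⟨a / a.gcd m, m / a.gcd m, (Int.mul_ediv_cancel' (Int.gcd_dvd_left a m)).symm,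
    (Nat.mul_div_cancel' (Int.gcd_dvd_natAbs_right a m)).symm, ?_⟩
  rw [Int.isCoprime_iff_gcd_eq_one, Int.natCast_div]
  exact Int.gcd_div_gcd_div_gcd hf

theorem eM_mul_mul_intCast {f : ℕ} (hf : f ≠ 0) (q : ℕ) [NeZero q] (n : ℤ) :
    eM (f * q) (f * n) = ZMod.stdAddChar (n : ZMod q) := by
  have hf' : (f : ℂ) ≠ 0 := Nat.cast_ne_zero.2 hf
  rw [eM, Nat.cast_mul, mul_left_comm, mul_div_mul_left _ _ hf', ZMod.stdAddChar_coe]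

theorem eM_intCast_mul_natCast_mul_natCast {m f q : ℕ} (hmq : m = f * q) (hf : f ≠ 0) [NeZero q]
    (a₁ : ℤ) (u v : ℕ) :
    eM m (((f * a₁ : ℤ) : ℂ) * u * v) =
      ZMod.stdAddChar ((a₁ : ZMod q) * (u : ZMod q) * (v : ZMod q)) := by
  have h := eM_mul_mul_intCast hf q (a₁ * u * v)
  push_cast at h ⊢
  rw [hmq, ← h]
  congr 1
  ring

theorem natCast_mul_minv {m q p : ℕ} [NeZero m] (hqm : q ∣ m) (hp : p.Coprime m) :
    (p : ZMod q) * (minv m p : ZMod q) = 1 := by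
  rw [minv, ZMod.natCast_val, ← ZMod.castHom_apply (h := hqm),
    ← map_natCast (ZMod.castHom hqm (ZMod q)) p, ← map_mul, ZMod.coe_mul_inv_eq_one p hp, map_one]

theorem natCast_eq_of_minv_eq {m q p p' : ℕ} [NeZero m] (hqm : q ∣ m) (hp : p.Coprime m)
    (hp' : p'.Coprime m) (h : (minv m p : ZMod q) = minv m p') : (p : ZMod q) = p' := by
  calc (p : ZMod q) = p * (p' * minv m p') := by rw [natCast_mul_minv hqm hp', mul_one]
    _ = (p * minv m p) * p' := by rw [h]; ring
    _ = p' := by rw [natCast_mul_minv hqm hp, one_mul]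

theorem mem_primesTo {m p : ℕ} {x : ℝ} :
    p ∈ primesTo m x ↔ p ∈ Icc 1 ⌊x⌋₊ ∧ p.Prime ∧ p.Coprime m := by
  unfold primesTo; exact mem_filter

theorem card_primesTo_le (m : ℕ) (x : ℝ) : #(primesTo m x) ≤ ⌊x⌋₊ := by
  simpa using card_le_card fun p hp => (mem_primesTo.1 hp).1

theorem card_filter_primesTo_le {κ : Type*} [DecidableEq κ] {m q : ℕ} [NeZero m] (hqm : q ∣ m)
    {x : ℝ} (γ : ℕ → κ) (hγ : ∀ p ∈ primesTo m x, ∀ p' ∈ primesTo m x, γ p = γ p' →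
      (minv m p : ZMod q) = minv m p') (r : κ) :
    #{p ∈ primesTo m x | γ p = r} ≤ ⌊x⌋₊ / q + 1 :=
  card_filter_eq_le_div_add_one q ⌊x⌋₊ (fun _ hp => (mem_Icc.1 (mem_primesTo.1 hp).1).2) γ
    (fun p hp p' hp' h => (ZMod.natCast_eq_natCast_iff' _ _ _).1 <|
      natCast_eq_of_minv_eq hqm (mem_primesTo.1 hp).2.2 (mem_primesTo.1 hp').2.2
        (hγ p hp p' hp' h)) r

theorem natCast_floor_div_add_one_le {x : ℝ} (hx : 0 ≤ x) (q : ℕ) :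
    ((⌊x⌋₊ / q + 1 : ℕ) : ℝ) ≤ x / q + 1 := by
  rw [Nat.cast_add_one]
  gcongr
  exact Nat.cast_div_le.trans (by gcongr; exact Nat.floor_le hx)

theorem stmt_9 : ∃ C : ℝ, 0 < C ∧ ∀ m : ℕ, 2 ≤ m → ∀ a : ℤ, ∀ f : ℕ, Int.gcd a m = f →
    ∀ x : ℝ, (m : ℝ) ^ ((1 : ℝ) / 2) ≤ x →
      ‖(∑ p₁ ∈ primesTo m x, ∑ p₂ ∈ primesTo m x,
          eM m ((a : ℂ) * (minv m p₁ : ℂ) * (minv m p₂ : ℂ)))‖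
        ≤ C * x * ((f : ℝ) * x / m + 1) * ((m : ℝ) / f) ^ ((1 : ℝ) / 2) := by
  refine ⟨1, one_pos, fun m hm a f hf x hx => ?_⟩
  have : NeZero m := ⟨by omega⟩
  obtain ⟨a₁, q, ha, hmq, hcop⟩ := exists_eq_gcd_mul_of_isCoprime (a := a) (NeZero.ne m)
  rw [hf] at ha hmq
  have hf0 : f ≠ 0 := by rintro rfl; omega
  have : NeZero q := ⟨by rintro rfl; omega⟩
  have hqm : q ∣ m := Dvd.intro_left f hmq.symm
  have hx0 : 0 ≤ x := (Real.rpow_nonneg m.cast_nonneg _).trans hx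
  simp only [ha, eM_intCast_mul_natCast_mul_natCast hmq hf0]
  calc _ ≤ #(primesTo m x) * (⌊x⌋₊ / q + 1 : ℕ) * √(Fintype.card (ZMod q)) :=
        norm_sum_sum_addChar_mul_le (ZMod.isPrimitive_stdAddChar q) _ _ _
          (card_filter_primesTo_le hqm _ fun _ _ _ _ h =>
            (ZMod.unitOfIsCoprime a₁ hcop).isUnit.mul_left_cancel h)
          (card_filter_primesTo_le hqm _ fun _ _ _ _ => id)
    _ ≤ x * (x / q + 1) * √q := by
        rw [ZMod.card]
        gcongr
        exacts [(Nat.cast_le.2 (card_primesTo_le m x)).trans (Nat.floor_le hx0),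
          natCast_floor_div_add_one_le hx0 q]
    _ = _ := by
        rw [hmq, Nat.cast_mul, mul_div_cancel_left₀ _ (Nat.cast_ne_zero.2 hf0),
          Real.sqrt_eq_rpow]
        field_simp
end

section
/- There is an absolute constant C > 0 such that the following holds. Let m ≥ 2 be an integer, let a be an integer with gcd(a,m) = f, and let x be a real number with x ≥ m^{1/2}. Then the exponential sum S₃(a;x) = Σ_{p₁,p₂,p₃ ≤ x, gcd(p₁p₂p₃,m)=1} e(a·p₁⁻¹·p₂⁻¹·p₃⁻¹ / m), where the sum runs over triples of primes p₁, p₂, p₃ ≤ x coprime to m, satisfies |S₃(a;x)| ≤ C·x^{5/2}·(f·x/m + 1)^{1/2}. -/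
open scoped BigOperators

/-!
Group the triple sum by `v = p₁⁻¹ p₂⁻¹`: it is `∑_{(p₁, p₂)} F (p₁⁻¹ p₂⁻¹)` with
`F v = ∑_{p₃} e_m(a v p₃⁻¹)`. Cauchy–Schwarz bounds its square by the number of collisions
`p₁⁻¹ p₂⁻¹ = p₃⁻¹ p₄⁻¹` times `∑_v |F v|²`, and orthogonality of additive characters turns the
latter into `m` times the number of collisions `a p⁻¹ = a p'⁻¹`. A collision of the first kind
forces `p₁ p₂ ≡ p₃ p₄ (mod m)` with both products at most `x²`, and a product of two primes
determines them up to order, so there are at most `2 x² (x² / m + 1)` of them; one of the second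
kind forces `p ≡ p' (mod m / f)`, so there are at most `x (f x / m + 1)` of them. Hence
`|S₃|² ≤ 2 x³ (x² + m) (f x / m + 1) ≤ 4 x⁵ (f x / m + 1)`, using `m ≤ x²`.
-/

open Finset

section Collisions

variable {ι β : Type*} [DecidableEq β]

def collisionCount (s : Finset ι) (φ : ι → β) : ℕ := #{q ∈ s ×ˢ s | φ q.1 = φ q.2}

lemma collisionCount_eq_sum_card_fiber_sq [Fintype β] (s : Finset ι) (φ : ι → β) :
    collisionCount s φ = ∑ b, #{i ∈ s | φ i = b} ^ 2 := by
  rw [collisionCount, card_eq_sum_card_fiberwise (f := fun q => φ q.1) (t := univ)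
    (fun _ _ => mem_univ _)]
  refine sum_congr rfl fun b _ => ?_
  rw [sq, ← card_product]
  congr 1
  ext ⟨i, j⟩
  simp only [mem_filter, mem_product]
  constructor
  · rintro ⟨⟨⟨hi, hj⟩, hij⟩, rfl⟩
    exact ⟨⟨hi, rfl⟩, hj, hij.symm⟩
  · rintro ⟨⟨hi, rfl⟩, hj, hij⟩
    exact ⟨⟨⟨hi, hj⟩, hij.symm⟩, rfl⟩

lemma collisionCount_le_card_mul {s : Finset ι} {φ : ι → β} {B : ℕ}
    (hB : ∀ j ∈ s, #{i ∈ s | φ i = φ j} ≤ B) : collisionCount s φ ≤ #s * B := by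
  rw [collisionCount, card_filter, sum_product_right]
  simp_rw [← card_filter]
  simpa using sum_le_card_nsmul s _ B hB

lemma norm_sum_comp_sq_le [Fintype β] (s : Finset ι) (φ : ι → β) (F : β → ℂ) :
    ‖∑ i ∈ s, F (φ i)‖ ^ 2 ≤ collisionCount s φ * ∑ b, ‖F b‖ ^ 2 := by
  have hfiber : ∑ i ∈ s, F (φ i) = ∑ b, (#{i ∈ s | φ i = b} : ℂ) * F b := by
    rw [← sum_fiberwise s φ]
    refine sum_congr rfl fun b _ => ?_
    rw [sum_congr rfl fun i hi => by rw [(mem_filter.mp hi).2], sum_const, nsmul_eq_mul]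
  calc ‖∑ i ∈ s, F (φ i)‖ ^ 2 ≤ (∑ b, (#{i ∈ s | φ i = b} : ℝ) * ‖F b‖) ^ 2 := by
        rw [hfiber]
        gcongr
        refine (norm_sum_le _ _).trans_eq (sum_congr rfl fun b _ => ?_)
        rw [norm_mul, Complex.norm_natCast]
    _ ≤ (∑ b, (#{i ∈ s | φ i = b} : ℝ) ^ 2) * ∑ b, ‖F b‖ ^ 2 := sum_mul_sq_le_sq_mul_sq _ _ _
    _ = collisionCount s φ * ∑ b, ‖F b‖ ^ 2 := by
        rw [collisionCount_eq_sum_card_fiber_sq]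
        push_cast
        rfl

end Collisions

lemma sum_norm_sq_sum_stdAddChar {ι : Type*} {m : ℕ} [NeZero m] (s : Finset ι) (g : ι → ZMod m) :
    ∑ u : ZMod m, ‖∑ i ∈ s, ZMod.stdAddChar (u * g i)‖ ^ 2 = m * collisionCount s g := by
  apply Complex.ofReal_injective
  push_cast
  simp_rw [← Complex.mul_conj', map_sum, sum_mul_sum, ← AddChar.map_neg_eq_conj,
    ← AddChar.map_add_eq_mul, ← mul_neg, ← mul_add]
  rw [sum_congr rfl fun u _ => (sum_product' s s _).symm, sum_comm]
  simp_rw [AddChar.sum_mulShift _ (ZMod.isPrimitive_stdAddChar m), ZMod.card, add_neg_eq_zero,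
    Nat.cast_ite, Nat.cast_zero]
  rw [← sum_filter, sum_const, nsmul_eq_mul, collisionCount, mul_comm]

lemma card_le_div_add_one_of_modEq {s : Finset ℕ} {N d v : ℕ} (hs : ∀ n ∈ s, n ≤ N)
    (hmod : ∀ n ∈ s, n ≡ v [MOD d]) : #s ≤ N / d + 1 := by
  have hinj : Set.InjOn (· / d) s := fun n hn n' hn' h => by
    rw [← Nat.div_add_mod n d, ← Nat.div_add_mod n' d, (hmod n hn).trans (hmod n' hn').symm]
    exact congrArg (d * · + _) h
  simpa using card_le_card_of_injOn (· / d) (t := Iic (N / d))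
    (fun n hn => mem_Iic.mpr (Nat.div_le_div_right (hs n hn))) hinj

lemma card_prime_mul_eq_le_two {P : Finset ℕ} (hP : ∀ p ∈ P, p.Prime) (n : ℕ) :
    #{q ∈ P ×ˢ P | q.1 * q.2 = n} ≤ 2 := by
  obtain hempty | ⟨⟨p, q⟩, hpq⟩ := eq_empty_or_nonempty {q ∈ P ×ˢ P | q.1 * q.2 = n}
  · simp [hempty]
  simp only [mem_filter, mem_product] at hpq
  obtain ⟨⟨hp, hq⟩, rfl⟩ := hpq
  have hn : p * q ≠ 0 := mul_ne_zero (hP p hp).ne_zero (hP q hq).ne_zero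
  calc #{r ∈ P ×ˢ P | r.1 * r.2 = p * q} ≤ #(p * q).primeFactors := by
        refine card_le_card_of_injOn Prod.fst (fun r hr => ?_) fun r hr r' hr' h => ?_
        · simp only [mem_coe, mem_filter, mem_product] at hr
          exact Nat.mem_primeFactors.mpr ⟨hP _ hr.1.1, hr.2 ▸ dvd_mul_right _ _, hn⟩
        · simp only [mem_coe, mem_filter, mem_product] at hr hr'
          refine Prod.ext h (Nat.eq_of_mul_eq_mul_left (hP _ hr.1.1).pos ?_)
          rw [hr.2, h, hr'.2]
    _ ≤ 2 := by
        rw [Nat.primeFactors_mul (hP p hp).ne_zero (hP q hq).ne_zero, (hP p hp).primeFactors,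
          (hP q hq).primeFactors]
        exact card_union_le _ _

section InverseResidues

variable {m : ℕ}

lemma mul_modEq_of_inv_mul_inv_eq {p q r s : ℕ} (hp : p.Coprime m) (hq : q.Coprime m)
    (hr : r.Coprime m) (hs : s.Coprime m)
    (h : (p : ZMod m)⁻¹ * (q : ZMod m)⁻¹ = (r : ZMod m)⁻¹ * (s : ZMod m)⁻¹) :
    p * q ≡ r * s [MOD m] := by
  rw [← ZMod.natCast_eq_natCast_iff]
  push_cast
  -- multiply `h` by `p q r s` and cancel each `n * n⁻¹ = 1`
  linear_combination (-(p * q * r * s : ZMod m)) * h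
    - (p * q * r * (r : ZMod m)⁻¹ : ZMod m) * ZMod.coe_mul_inv_eq_one s hs
    - (p * q : ZMod m) * ZMod.coe_mul_inv_eq_one r hr
    + (r * s * p * (p : ZMod m)⁻¹ : ZMod m) * ZMod.coe_mul_inv_eq_one q hq
    + (r * s : ZMod m) * ZMod.coe_mul_inv_eq_one p hp

lemma modEq_div_gcd_of_mul_inv_eq (hm : 0 < m) {a : ℤ} {p q : ℕ} (hp : p.Coprime m)
    (hq : q.Coprime m) (h : (a : ZMod m) * (p : ZMod m)⁻¹ = a * (q : ZMod m)⁻¹) :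
    p ≡ q [MOD m / Int.gcd a m] := by
  have hmul : a * q ≡ a * p [ZMOD m] := by
    rw [← ZMod.intCast_eq_intCast_iff]
    push_cast
    linear_combination (p * q : ZMod m) * h
      - (a * q : ZMod m) * ZMod.coe_mul_inv_eq_one p hp
      + (a * p : ZMod m) * ZMod.coe_mul_inv_eq_one q hq
  have := (Int.ModEq.cancel_left_div_gcd (by exact_mod_cast hm) hmul).symm
  rwa [Int.gcd_comm, ← Int.natCast_div, Int.natCast_modEq_iff] at this

variable {P : Finset ℕ} {L : ℕ}

lemma card_inv_mul_inv_fiber_le (hprime : ∀ p ∈ P, p.Prime) (hcop : ∀ p ∈ P, p.Coprime m)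
    (hle : ∀ p ∈ P, p ≤ L) {r : ℕ × ℕ} (hr : r ∈ P ×ˢ P) :
    #{q ∈ P ×ˢ P | (q.1 : ZMod m)⁻¹ * (q.2 : ZMod m)⁻¹ = (r.1 : ZMod m)⁻¹ * (r.2 : ZMod m)⁻¹}
      ≤ 2 * (L * L / m + 1) := by
  obtain ⟨hr₁, hr₂⟩ := mem_product.mp hr
  calc _ ≤ 2 * #(image (fun q : ℕ × ℕ => q.1 * q.2) _) :=
        card_le_mul_card_image _ 2 fun n _ =>
          (card_le_card (filter_subset_filter _ (filter_subset _ _))).trans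
            (card_prime_mul_eq_le_two hprime n)
    _ ≤ 2 * (L * L / m + 1) := by
        gcongr
        refine card_le_div_add_one_of_modEq (v := r.1 * r.2) ?_ ?_ <;>
          simp only [mem_image, mem_filter, mem_product] <;>
          rintro _ ⟨q, ⟨⟨hq₁, hq₂⟩, hq⟩, rfl⟩
        · exact Nat.mul_le_mul (hle _ hq₁) (hle _ hq₂)
        · exact mul_modEq_of_inv_mul_inv_eq (hcop _ hq₁) (hcop _ hq₂) (hcop _ hr₁) (hcop _ hr₂)
            hq

lemma card_mul_inv_fiber_le (hm : 0 < m) (a : ℤ) (hcop : ∀ p ∈ P, p.Coprime m)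
    (hle : ∀ p ∈ P, p ≤ L) {q : ℕ} (hq : q ∈ P) :
    #{p ∈ P | (a : ZMod m) * ((p : ℕ) : ZMod m)⁻¹ = a * (q : ZMod m)⁻¹}
      ≤ L / (m / Int.gcd a m) + 1 :=
  card_le_div_add_one_of_modEq (fun p hp => hle p (mem_filter.mp hp).1) fun _ hp =>
    modEq_div_gcd_of_mul_inv_eq hm (hcop _ (mem_filter.mp hp).1) (hcop q hq) (mem_filter.mp hp).2

end InverseResidues

lemma eM_intCast (m : ℕ) [NeZero m] (j : ℤ) : eM m j = ZMod.stdAddChar (j : ZMod m) := by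
  rw [ZMod.stdAddChar_coe, eM]

lemma natCast_minv (m n : ℕ) [NeZero m] : (minv m n : ZMod m) = (n : ZMod m)⁻¹ :=
  ZMod.natCast_zmod_val _

lemma norm_sq_sum_eM_minv_le {m : ℕ} (hm : 0 < m) (a : ℤ) {P : Finset ℕ} {L : ℕ}
    (hprime : ∀ p ∈ P, p.Prime) (hcop : ∀ p ∈ P, p.Coprime m) (hle : ∀ p ∈ P, p ≤ L) :
    ‖∑ p₁ ∈ P, ∑ p₂ ∈ P, ∑ p₃ ∈ P,
        eM m ((a : ℂ) * (minv m p₁ : ℂ) * (minv m p₂ : ℂ) * (minv m p₃ : ℂ))‖ ^ 2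
      ≤ (#P * #P * (2 * (L * L / m + 1)) : ℕ)
        * (m * (#P * (L / (m / Int.gcd a m) + 1)) : ℕ) := by
  have : NeZero m := ⟨hm.ne'⟩
  let F : ZMod m → ℂ := fun v => ∑ p ∈ P, ZMod.stdAddChar (v * ((a : ZMod m) * (p : ZMod m)⁻¹))
  have hS : ∑ p₁ ∈ P, ∑ p₂ ∈ P, ∑ p₃ ∈ P,
        eM m ((a : ℂ) * (minv m p₁ : ℂ) * (minv m p₂ : ℂ) * (minv m p₃ : ℂ))
      = ∑ q ∈ P ×ˢ P, F ((q.1 : ZMod m)⁻¹ * (q.2 : ZMod m)⁻¹) := by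
    rw [sum_product]
    refine sum_congr rfl fun p₁ _ => sum_congr rfl fun p₂ _ => sum_congr rfl fun p₃ _ => ?_
    rw [show (a : ℂ) * (minv m p₁ : ℂ) * (minv m p₂ : ℂ) * (minv m p₃ : ℂ)
        = ((a * minv m p₁ * minv m p₂ * minv m p₃ : ℤ) : ℂ) by push_cast; rfl, eM_intCast]
    push_cast [natCast_minv]
    congr 1
    ring
  rw [hS]
  calc _ ≤ collisionCount (P ×ˢ P) (fun q : ℕ × ℕ => (q.1 : ZMod m)⁻¹ * (q.2 : ZMod m)⁻¹)
        * ∑ v, ‖F v‖ ^ 2 := norm_sum_comp_sq_le _ _ _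
    _ = collisionCount (P ×ˢ P) (fun q : ℕ × ℕ => (q.1 : ZMod m)⁻¹ * (q.2 : ZMod m)⁻¹)
        * (m * collisionCount P fun p : ℕ => (a : ZMod m) * (p : ZMod m)⁻¹) := by
      rw [sum_norm_sq_sum_stdAddChar]
    _ ≤ _ := by
      rw [← card_product]
      push_cast
      gcongr
      · exact_mod_cast collisionCount_le_card_mul fun r hr =>
          card_inv_mul_inv_fiber_le hprime hcop hle hr
      · exact_mod_cast collisionCount_le_card_mul fun q hq =>
          card_mul_inv_fiber_le hm a hcop hle hq

lemma natCast_div_div_le {L m f : ℕ} (hm : 0 < m) (hf : f ∣ m) :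
    ((L / (m / f) : ℕ) : ℝ) ≤ f * L / m := by
  have hf0 : (f : ℝ) ≠ 0 := by exact_mod_cast (Nat.pos_of_dvd_of_pos hf hm).ne'
  calc ((L / (m / f) : ℕ) : ℝ) ≤ L / ((m / f : ℕ) : ℝ) := Nat.cast_div_le
    _ = f * L / m := by rw [Nat.cast_div hf hf0]; field_simp

lemma norm_sq_sum_primesTo_le {m : ℕ} (hm : 0 < m) (a : ℤ) {x : ℝ}
    (hx : (m : ℝ) ^ ((1 : ℝ) / 2) ≤ x) :
    ‖∑ p₁ ∈ primesTo m x, ∑ p₂ ∈ primesTo m x, ∑ p₃ ∈ primesTo m x,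
        eM m ((a : ℂ) * (minv m p₁ : ℂ) * (minv m p₂ : ℂ) * (minv m p₃ : ℂ))‖ ^ 2
      ≤ 4 * x ^ 5 * ((Int.gcd a m : ℝ) * x / m + 1) := by
  rw [← Real.sqrt_eq_rpow, Real.sqrt_le_iff] at hx
  obtain ⟨hx0, hmx⟩ := hx
  set L := ⌊x⌋₊
  have hL : (L : ℝ) ≤ x := Nat.floor_le hx0
  have hP : ∀ p ∈ primesTo m x, p.Prime ∧ p.Coprime m ∧ p ≤ L := fun p hp => by
    simp only [primesTo, mem_filter, mem_Icc] at hp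
    exact ⟨hp.2.1, hp.2.2, hp.1.2⟩
  have hN : (#(primesTo m x) : ℝ) ≤ x :=
    le_trans (by exact_mod_cast (card_le_card (filter_subset _ _)).trans (by simp [L])) hL
  have hA : ((L * L / m : ℕ) : ℝ) ≤ x ^ 2 / m :=
    Nat.cast_div_le.trans (by gcongr; push_cast; nlinarith)
  have hB : ((L / (m / Int.gcd a m) : ℕ) : ℝ) ≤ Int.gcd a m * x / m :=
    (natCast_div_div_le hm (Int.gcd_dvd_natAbs_right a m)).trans (by gcongr)
  refine (norm_sq_sum_eM_minv_le hm a (fun p hp => (hP p hp).1) (fun p hp => (hP p hp).2.1)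
    fun p hp => (hP p hp).2.2).trans ?_
  push_cast
  calc _ ≤ x * x * (2 * (x ^ 2 / m + 1)) * (m * (x * (Int.gcd a m * x / m + 1))) := by gcongr
    _ = 2 * x ^ 3 * (x ^ 2 + m) * (Int.gcd a m * x / m + 1) := by field_simp
    _ ≤ 4 * x ^ 5 * (Int.gcd a m * x / m + 1) := by
        have : x ^ 2 + m ≤ 2 * x ^ 2 := by linarith
        calc _ ≤ 2 * x ^ 3 * (2 * x ^ 2) * (Int.gcd a m * x / m + 1) := by gcongr
          _ = _ := by ring

lemma le_two_mul_rpow_of_sq_le {s x y : ℝ} (hs : 0 ≤ s) (hx : 0 ≤ x) (hy : 0 ≤ y)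
    (h : s ^ 2 ≤ 4 * x ^ 5 * y) : s ≤ 2 * x ^ ((5 : ℝ) / 2) * y ^ ((1 : ℝ) / 2) := by
  refine (pow_le_pow_iff_left₀ hs (by positivity) two_ne_zero).mp (h.trans_eq ?_)
  rw [mul_pow, mul_pow, ← Real.rpow_natCast (x ^ _), ← Real.rpow_natCast (y ^ _),
    ← Real.rpow_mul hx, ← Real.rpow_mul hy]
  norm_num

theorem stmt_10 : ∃ C : ℝ, 0 < C ∧ ∀ m : ℕ, 2 ≤ m → ∀ a : ℤ, ∀ f : ℕ, Int.gcd a m = f →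
    ∀ x : ℝ, (m : ℝ) ^ ((1 : ℝ) / 2) ≤ x →
      ‖(∑ p₁ ∈ primesTo m x, ∑ p₂ ∈ primesTo m x, ∑ p₃ ∈ primesTo m x,
          eM m ((a : ℂ) * (minv m p₁ : ℂ) * (minv m p₂ : ℂ) * (minv m p₃ : ℂ)))‖
        ≤ C * x ^ ((5 : ℝ) / 2) * ((f : ℝ) * x / m + 1) ^ ((1 : ℝ) / 2) := by
  refine ⟨2, two_pos, ?_⟩
  rintro m hm a _ rfl x hx
  have hx0 : 0 ≤ x := (Real.rpow_nonneg m.cast_nonneg _).trans hx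
  exact le_two_mul_rpow_of_sq_le (norm_nonneg _) hx0 (by positivity)
    (norm_sq_sum_primesTo_le (by omega) a hx)
end
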